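/- arXiv:0806.3740 — 3 statements merged into one kernel-verified Lean document; each statement's English description precedes it below -/
import Mathlib

section
/- If g ∈ GL_n(ℂ) satisfies gHg⁻¹ = H, then gTg⁻¹ = T; i.e., every element of GL_n(ℂ) normalizing H also normalizes the full diagonal torus T. -/
/-! Every invertible diagonal matrix `t` factors as the central scalar `t₀₀` times an element of
`H`, so `T = Z(GLₙ(ℂ)) · H`. Conjugation fixes the centre pointwise and is multiplicative, so an
element normalizing `H` normalizes `Z · H = T`. -/

noncomputable section

abbrev GLn (n : ℕ) := GL (Fin n) ℂ

def Tset (n : ℕ) : Set (GLn n) :=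
  {g | ∀ i j : Fin n, i ≠ j → (g : Matrix (Fin n) (Fin n) ℂ) i j = 0}

def Hset (n : ℕ) [NeZero n] : Set (GLn n) :=
  {g | g ∈ Tset n ∧ (g : Matrix (Fin n) (Fin n) ℂ) 0 0 = 1}

open scoped Pointwise

theorem Set.image_conj_center_mul {G : Type*} [Group G] (g : G) {H : Set G}
    (hH : (fun h => g * h * g⁻¹) '' H = H) :
    (fun h => g * h * g⁻¹) '' ((Subgroup.center G : Set G) * H) =
      (Subgroup.center G : Set G) * H := by
  have hconj : (fun h => g * h * g⁻¹) = MulAut.conj g := funext fun _ => rfl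
  have hcenter : MulAut.conj g '' (Subgroup.center G : Set G) = Subgroup.center G := by
    refine (Set.image_congr fun z hz => ?_).trans (Set.image_id _)
    rw [MulAut.conj_apply, Subgroup.mem_center_iff.mp hz g, mul_inv_cancel_right]
    rfl
  rw [hconj, Set.image_mul, hcenter, ← hconj, hH]

namespace Matrix.GeneralLinearGroup

theorem val_scalar_mul {ι R : Type*} [Fintype ι] [DecidableEq ι] [CommRing R] (u : Rˣ)
    (A : GL ι R) : ((scalar ι u * A : GL ι R) : Matrix ι ι R) = (u : R) • (A : Matrix ι ι R) := by
  rw [Units.val_mul, coe_scalar, Matrix.scalar_apply, Matrix.smul_eq_diagonal_mul]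

theorem ne_zero_of_isDiag {ι K : Type*} [Fintype ι] [DecidableEq ι] [Field K] {t : GL ι K}
    (ht : (t : Matrix ι ι K).IsDiag) (i : ι) : (t : Matrix ι ι K) i i ≠ 0 := by
  have h := congr_fun₂ t.mul_inv i i
  rw [← ht.diagonal_diag, Matrix.diagonal_mul, Matrix.one_apply_eq] at h
  exact left_ne_zero_of_mul_eq_one h

end Matrix.GeneralLinearGroup

open Matrix.GeneralLinearGroup

theorem mem_Tset_iff_isDiag {n : ℕ} {t : GLn n} :
    t ∈ Tset n ↔ (t : Matrix (Fin n) (Fin n) ℂ).IsDiag :=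
  Iff.rfl

theorem Tset_eq_center_mul_Hset (n : ℕ) [NeZero n] :
    Tset n = (Subgroup.center (GLn n) : Set (GLn n)) * Hset n := by
  ext t
  simp only [Set.mem_mul, SetLike.mem_coe, center_eq_range_scalar, MonoidHom.mem_range]
  constructor
  · intro ht
    set c : ℂˣ := Units.mk0 _ (ne_zero_of_isDiag (mem_Tset_iff_isDiag.mp ht) 0)
    refine ⟨scalar (Fin n) c, ⟨c, rfl⟩, scalar (Fin n) c⁻¹ * t, ⟨?_, ?_⟩, by simp⟩
    · rw [mem_Tset_iff_isDiag, val_scalar_mul]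
      exact (mem_Tset_iff_isDiag.mp ht).smul _
    · rw [val_scalar_mul, Matrix.smul_apply, smul_eq_mul, Units.val_inv_eq_inv_val]
      exact inv_mul_cancel₀ c.ne_zero
  · rintro ⟨_, ⟨u, rfl⟩, h, ⟨hT, -⟩, rfl⟩
    rw [mem_Tset_iff_isDiag, val_scalar_mul]
    exact (mem_Tset_iff_isDiag.mp hT).smul _

theorem normalizes_H_normalizes_T_general (n : ℕ) [NeZero n] (g : GLn n)
    (hg : (fun h => g * h * g⁻¹) '' Hset n = Hset n) :
    (fun h => g * h * g⁻¹) '' Tset n = Tset n := by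
  rw [Tset_eq_center_mul_Hset n]
  exact Set.image_conj_center_mul g hg

theorem normalizes_H_normalizes_T (n : ℕ) [NeZero n] (hn : 2 ≤ n) (g : GLn n)
    (hg : (fun h => g * h * g⁻¹) '' Hset n = Hset n) :
    (fun h => g * h * g⁻¹) '' Tset n = Tset n :=
  normalizes_H_normalizes_T_general n g hg

end
end

section
/- Consider the action of the multiplicative group ℂˣ on the polynomial ring ℂ[x₁, …, xₙ] by ℂ-algebra automorphisms determined on variables by t·x₁ = t⁻¹x₁ and t·xᵢ = t xᵢ for 2 ≤ i ≤ n. Then the subalgebra of ℂˣ-invariant polynomials equals the ℂ-subalgebra generated by x₁x₂, x₁x₃, …, x₁xₙ, and the n−1 polynomials x₁x₂, …, x₁xₙ are algebraically independent over ℂ. (This computes the cohomology ring H•(f, f₀̄; ℂ) ≅ ℂ[Y₂∂₁*, …, Yₙ∂₁*] of the detecting subalgebra f of W(n).) -/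
/-!
The torus acts diagonally, so a polynomial is invariant iff each of its monomials is, i.e. iff
every exponent `d` in its support satisfies `d 0 = ∑_{i ≠ 0} d i` (test with `t = 2`). Such a
monomial is `∏_{i ≠ 0} (x₀ xᵢ) ^ d i`. Sending `x₀ ↦ 1` maps the `x₀ xᵢ` onto independent
variables, which gives algebraic independence.
-/

noncomputable section

open MvPolynomial

/-- The ℂ-algebra endomorphism of `ℂ[x₁,…,xₙ]` determined on variables by
`t·x₁ = t⁻¹x₁` and `t·xᵢ = t·xᵢ` for `i ≥ 2`. -/
def scaleAct (n : ℕ) [NeZero n] (t : ℂˣ) :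
    MvPolynomial (Fin n) ℂ →ₐ[ℂ] MvPolynomial (Fin n) ℂ :=
  aeval fun i : Fin n => (if i = 0 then ((t⁻¹ : ℂˣ) : ℂ) else (t : ℂ)) • X i

namespace MvPolynomial

variable {σ R : Type*}

theorem aeval_smul_X_monomial [CommSemiring R] (c : σ → R) (d : σ →₀ ℕ) (a : R) :
    aeval (fun i => c i • X i) (monomial d a : MvPolynomial σ R) =
      monomial d ((d.prod fun i k => c i ^ k) * a) := by
  rw [aeval_monomial, monomial_eq, C_mul]
  simp only [smul_eq_C_mul, mul_pow, Finsupp.prod_mul, ← C_pow, ← map_finsuppProd, algebraMap_eq]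
  ring

theorem coeff_aeval_smul_X [CommSemiring R] (c : σ → R) (f : MvPolynomial σ R) (d : σ →₀ ℕ) :
    coeff d (aeval (fun i => c i • X i) f) = (d.prod fun i k => c i ^ k) * coeff d f := by
  classical
  induction f using MvPolynomial.induction_on' with
  | monomial e a =>
    rw [aeval_smul_X_monomial, coeff_monomial, coeff_monomial]
    split_ifs with h
    · rw [h]
    · rw [mul_zero]
  | add p q hp hq => rw [map_add, coeff_add, coeff_add, hp, hq, mul_add]

theorem monomial_mem_adjoin_X_mul_X [CommSemiring R] [Fintype σ] [DecidableEq σ] (i₀ : σ)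
    {d : σ →₀ ℕ} (hd : d i₀ = ∑ i ∈ Finset.univ.erase i₀, d i) (a : R) :
    monomial d a ∈ Algebra.adjoin R (Set.range fun i : {i // i ≠ i₀} => X i₀ * X (i : σ)) := by
  have hprod : monomial d a = C a * ∏ i ∈ Finset.univ.erase i₀, (X i₀ * X i) ^ d i := by
    rw [monomial_eq, Finsupp.prod_pow, ← Finset.mul_prod_erase Finset.univ _ (Finset.mem_univ i₀)]
    simp only [mul_pow]
    rw [Finset.prod_mul_distrib, Finset.prod_pow_eq_pow_sum, ← hd]
  rw [hprod]
  refine Subalgebra.mul_mem _ (Subalgebra.algebraMap_mem _ a) (Subalgebra.prod_mem _ fun i hi => ?_)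
  exact Subalgebra.pow_mem _ (Algebra.subset_adjoin <|
    Set.mem_range_self (⟨i, (Finset.mem_erase.mp hi).1⟩ : {i // i ≠ i₀})) _

theorem algebraicIndependent_X_mul_X [CommRing R] [DecidableEq σ] (i₀ : σ) :
    AlgebraicIndependent R fun i : {i // i ≠ i₀} => (X i₀ * X (i : σ) : MvPolynomial σ R) := by
  let φ : MvPolynomial σ R →ₐ[R] MvPolynomial {i // i ≠ i₀} R :=
    aeval fun j => if h : j = i₀ then 1 else X ⟨j, h⟩
  refine AlgebraicIndependent.of_comp φ ?_
  convert algebraicIndependent_X {i // i ≠ i₀} R using 1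
  funext i
  simp [φ, dif_neg i.2]

end MvPolynomial

section scaleAct

variable {n : ℕ} [NeZero n]

theorem coeff_scaleAct (t : ℂˣ) (f : MvPolynomial (Fin n) ℂ) (d : Fin n →₀ ℕ) :
    coeff d (scaleAct n t f) =
      ((t⁻¹ : ℂˣ) : ℂ) ^ d 0 * (t : ℂ) ^ (∑ i ∈ Finset.univ.erase 0, d i) * coeff d f := by
  rw [scaleAct, coeff_aeval_smul_X, Finsupp.prod_fintype _ _ (fun i => pow_zero _),
    ← Finset.mul_prod_erase Finset.univ _ (Finset.mem_univ 0), if_pos rfl,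
    ← Finset.prod_pow_eq_pow_sum]
  congr 2
  exact Finset.prod_congr rfl fun i hi => by rw [if_neg (Finset.mem_erase.mp hi).1]

theorem scaleAct_X_zero_mul_X (t : ℂˣ) {i : Fin n} (hi : i ≠ 0) :
    scaleAct n t (X 0 * X i) = X 0 * X i := by
  simp only [scaleAct, map_mul, aeval_X, if_pos, if_neg hi, smul_mul_smul_comm, Units.inv_mul,
    one_smul]

theorem adjoin_X_zero_mul_X_le_equalizer (t : ℂˣ) :
    Algebra.adjoin ℂ (Set.range fun i : {i : Fin n // i ≠ 0} => X (0 : Fin n) * X (i : Fin n)) ≤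
      AlgHom.equalizer (scaleAct n t) (AlgHom.id ℂ _) :=
  Algebra.adjoin_le <| Set.range_subset_iff.mpr fun i => scaleAct_X_zero_mul_X t i.2

theorem eq_sum_of_mem_support_of_forall_scaleAct_eq {f : MvPolynomial (Fin n) ℂ}
    (hf : ∀ t, scaleAct n t f = f) {d : Fin n →₀ ℕ} (hd : d ∈ f.support) :
    d 0 = ∑ i ∈ Finset.univ.erase 0, d i := by
  have h := congr_arg (coeff d) (hf (Units.mk0 2 two_ne_zero))
  rw [coeff_scaleAct, mul_left_eq_self₀, or_iff_left (mem_support_iff.mp hd), Units.val_mk0,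
    Units.val_inv_eq_inv_val, Units.val_mk0, inv_pow,
    inv_mul_eq_one₀ (pow_ne_zero _ two_ne_zero)] at h
  exact Nat.pow_right_injective le_rfl (by exact_mod_cast h)

end scaleAct

theorem units_invariants_of_polynomial_ring_general (n : ℕ) [NeZero n] :
    -- the subalgebra of `ℂˣ`-invariant polynomials is generated by `x₁x₂, …, x₁xₙ` …
    (∀ f : MvPolynomial (Fin n) ℂ, (∀ t : ℂˣ, scaleAct n t f = f) ↔
      f ∈ Algebra.adjoin ℂ
        (Set.range fun i : {i : Fin n // i ≠ 0} => X (0 : Fin n) * X (i : Fin n))) ∧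
    -- … and the `n−1` polynomials `x₁x₂, …, x₁xₙ` are algebraically independent over ℂ.
    AlgebraicIndependent ℂ
      (fun i : {i : Fin n // i ≠ 0} =>
        (X (0 : Fin n) * X (i : Fin n) : MvPolynomial (Fin n) ℂ)) := by
  refine ⟨fun f => ⟨fun hf => ?_, fun hf t => adjoin_X_zero_mul_X_le_equalizer t hf⟩,
    algebraicIndependent_X_mul_X 0⟩
  rw [f.as_sum]
  exact Subalgebra.sum_mem _ fun d hd =>
    monomial_mem_adjoin_X_mul_X 0 (eq_sum_of_mem_support_of_forall_scaleAct_eq hf hd) _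

theorem units_invariants_of_polynomial_ring (n : ℕ) [NeZero n] (hn : 2 ≤ n) :
    -- the subalgebra of `ℂˣ`-invariant polynomials is generated by `x₁x₂, …, x₁xₙ` …
    (∀ f : MvPolynomial (Fin n) ℂ, (∀ t : ℂˣ, scaleAct n t f = f) ↔
      f ∈ Algebra.adjoin ℂ
        (Set.range fun i : {i : Fin n // i ≠ 0} => X (0 : Fin n) * X (i : Fin n))) ∧
    -- … and the `n−1` polynomials `x₁x₂, …, x₁xₙ` are algebraically independent over ℂ.
    AlgebraicIndependent ℂ
      (fun i : {i : Fin n // i ≠ 0} =>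
        (X (0 : Fin n) * X (i : Fin n) : MvPolynomial (Fin n) ℂ)) :=
  units_invariants_of_polynomial_ring_general n

end
end

section
/- Inside the superalgebra of ℂ-linear endomorphisms of Λ(V), for c = (c₁,…,cₙ) ∈ ℂⁿ let h_c denote the even superderivation determined by h_c(eᵢ) = cᵢ eᵢ for all i; let ∂₁ denote the odd superderivation determined by ∂₁(e₁) = 1 and ∂₁(eᵢ) = 0 for i ≥ 2; and for 2 ≤ i ≤ n let E_i denote the odd superderivation determined by E_i(eᵢ) = e₁ ∧ eᵢ and E_i(e_j) = 0 for j ≠ i. Then the subspace f = span{h_c : c ∈ ℂⁿ} ⊕ span{∂₁, E₂, …, Eₙ} is closed under the supercommutator [D, D′] = D∘D′ − (−1)^{pp′} D′∘D (p, p′ the parities of D, D′); explicitly, [h_c, h_{c′}] = 0, [h_c, ∂₁] = −c₁∂₁, [h_c, E_i] = c₁E_i, [∂₁, ∂₁] = 0, [E_i, E_j] = 0 for all i, j, and [∂₁, E_i] = h_{ε_i} where ε_i ∈ ℂⁿ is the i-th standard basis vector. (Hence f is a Lie subsuperalgebra of W(n), the detecting subalgebra.) -/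
/-!
STATEMENT 15: the detecting subalgebra `f = span{h_c} ⊕ span{∂₁, E₂, …, Eₙ}` of
`W(n)` is closed under the supercommutator, with the explicit bracket relations
`[h_c,h_{c′}] = 0`, `[h_c,∂₁] = −c₁∂₁`, `[h_c,E_i] = c₁E_i`, `[∂₁,∂₁] = 0`,
`[E_i,E_j] = 0`, `[∂₁,E_i] = h_{ε_i}`.
-/

noncomputable section

open ExteriorAlgebra

/-- `V = ℂⁿ`. -/
abbrev Vn (n : ℕ) := Fin n → ℂ

/-- The exterior algebra `Λ(V)`. -/
abbrev Lam (n : ℕ) := ExteriorAlgebra ℂ (Vn n)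

/-- The `m`-th exterior power `Λᵐ V`, as a submodule of the exterior algebra. -/
def lamPow (n m : ℕ) : Submodule ℂ (Lam n) :=
  LinearMap.range (ι ℂ : Vn n →ₗ[ℂ] Lam n) ^ m

/-- The parity component `Λ(V)_p` (`p ∈ ℤ/2`). -/
def lamPar (n : ℕ) (p : ZMod 2) : Submodule ℂ (Lam n) :=
  ⨆ m : ℕ, ⨆ _ : ((m : ZMod 2) = p), lamPow n m

/-- The sign `(−1)^{pq}` for parities `p q : ℤ/2`. -/
def parSign (p q : ZMod 2) : ℂ := (-1 : ℂ) ^ (p.val * q.val)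

/-- `D : Λ(V) → Λ(V)` is a superderivation of parity `p`. -/
def IsSuperDer (n : ℕ) (p : ZMod 2) (D : Lam n →ₗ[ℂ] Lam n) : Prop :=
  (∀ q : ZMod 2, ∀ x ∈ lamPar n q, D x ∈ lamPar n (p + q)) ∧
  (∀ q : ZMod 2, ∀ x ∈ lamPar n q, ∀ y : Lam n,
      D (x * y) = D x * y + parSign p q • (x * D y))

/-- The standard basis vector `eᵢ` of `ℂⁿ`. -/
def ev (n : ℕ) (i : Fin n) : Vn n := Pi.single i 1

/-! A superderivation of `Λ(V)` is determined by its values on `e₁, …, eₙ`, since `Λ(V)` is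
generated by `V` and left multiplication by `v ∈ V` obeys the Leibniz rule with sign `(−1)^p`.
The supercommutator of superderivations of parities `p, p'` is a superderivation of parity
`p + p'`, so each bracket relation only has to be checked on the generators `eᵢ`. Closure of `f`
then follows from the relations on spanning sets by bilinearity of the bracket. -/

lemma parSign_zero_left (q : ZMod 2) : parSign 0 q = 1 := by simp [parSign]

lemma parSign_zero_right (p : ZMod 2) : parSign p 0 = 1 := by simp [parSign]

lemma parSign_one_one : parSign 1 1 = -1 := by simp [parSign, ZMod.val_one]

lemma parSign_comm (p q : ZMod 2) : parSign p q = parSign q p := by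
  rw [parSign, parSign, mul_comm]

lemma parSign_add_left (p p' q : ZMod 2) :
    parSign (p + p') q = parSign p q * parSign p' q := by
  have hmod : ((p + p').val * q.val) % 2 = (p.val * q.val + p'.val * q.val) % 2 := by
    revert p p' q; decide
  rw [parSign, parSign, parSign, ← pow_add, neg_one_pow_eq_pow_mod_two, hmod,
    ← neg_one_pow_eq_pow_mod_two]

lemma parSign_add_right (p q q' : ZMod 2) :
    parSign p (q + q') = parSign p q * parSign p q' := by
  rw [parSign_comm, parSign_add_left, parSign_comm q, parSign_comm q']

lemma parSign_mul_self (p q : ZMod 2) : parSign p q * parSign p q = 1 := by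
  rw [parSign, ← pow_add, ← two_mul, pow_mul]; simp

section lamPar

variable {n : ℕ}

lemma lamPow_le_lamPar (m : ℕ) : lamPow n m ≤ lamPar n m :=
  le_iSup₂_of_le (f := fun (k : ℕ) (_ : (k : ZMod 2) = m) => lamPow n k) m rfl le_rfl

lemma one_mem_lamPar : (1 : Lam n) ∈ lamPar n 0 := by
  have h : (1 : Lam n) ∈ lamPow n 0 := by
    rw [lamPow, pow_zero]; exact Submodule.one_le.mp le_rfl
  simpa using lamPow_le_lamPar 0 h

lemma ι_mem_lamPar (v : Vn n) : ι ℂ v ∈ lamPar n 1 := by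
  have h : ι ℂ v ∈ lamPow n 1 := by
    rw [lamPow, pow_one]; exact LinearMap.mem_range_self _ v
  simpa using lamPow_le_lamPar 1 h

end lamPar

namespace IsSuperDer

variable {n : ℕ} {p p' : ZMod 2} {D D' : Lam n →ₗ[ℂ] Lam n}

lemma map_one (hD : IsSuperDer n p D) : D 1 = 0 := by
  have h := hD.2 0 1 one_mem_lamPar 1
  rw [parSign_zero_right, one_smul] at h
  simpa using h

lemma zero (p : ZMod 2) : IsSuperDer n p 0 :=
  ⟨fun _ _ _ => zero_mem _, fun _ _ _ _ => by simp⟩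

lemma smul (c : ℂ) (hD : IsSuperDer n p D) : IsSuperDer n p (c • D) := by
  refine ⟨fun q x hx => Submodule.smul_mem _ _ (hD.1 q x hx), fun q x hx y => ?_⟩
  simp only [LinearMap.smul_apply, hD.2 q x hx y, smul_add, smul_mul_assoc, mul_smul_comm,
    smul_comm c]

lemma map_ι_mul (hD : IsSuperDer n p D) (v : Vn n) (y : Lam n) :
    D (ι ℂ v * y) = D (ι ℂ v) * y + parSign p 1 • (ι ℂ v * D y) :=
  hD.2 1 _ (ι_mem_lamPar v) y

lemma ext_ι (hD : IsSuperDer n p D) (hD' : IsSuperDer n p D')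
    (h : ∀ v, D (ι ℂ v) = D' (ι ℂ v)) : D = D' := by
  refine LinearMap.ext fun x => ?_
  induction x using CliffordAlgebra.left_induction with
  | algebraMap r =>
    rw [Algebra.algebraMap_eq_smul_one, map_smul, map_smul, hD.map_one, hD'.map_one]
  | add x y hx hy => rw [map_add, map_add, hx, hy]
  | ι_mul x v hx => rw [hD.map_ι_mul, hD'.map_ι_mul, h, hx]

lemma ext_ev (hD : IsSuperDer n p D) (hD' : IsSuperDer n p D')
    (h : ∀ i, D (ι ℂ (ev n i)) = D' (ι ℂ (ev n i))) : D = D' :=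
  hD.ext_ι hD' <| LinearMap.congr_fun <|
    (Pi.basisFun ℂ (Fin n)).ext (f₁ := D ∘ₗ ι ℂ) (f₂ := D' ∘ₗ ι ℂ) fun i => by simpa [ev] using h i

lemma superBracket (hD : IsSuperDer n p D) (hD' : IsSuperDer n p' D') :
    IsSuperDer n (p + p') (D ∘ₗ D' - parSign p p' • (D' ∘ₗ D)) := by
  refine ⟨fun q x hx => ?_, fun q x hx y => ?_⟩
  · have h₁ : D (D' x) ∈ lamPar n (p + p' + q) := by
      simpa only [add_assoc] using hD.1 _ _ (hD'.1 q x hx)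
    have h₂ : D' (D x) ∈ lamPar n (p + p' + q) := by
      simpa only [add_left_comm p', add_assoc] using hD'.1 _ _ (hD.1 q x hx)
    exact sub_mem h₁ (Submodule.smul_mem _ _ h₂)
  · simp only [LinearMap.sub_apply, LinearMap.comp_apply, LinearMap.smul_apply]
    rw [hD'.2 q x hx y, hD.2 q x hx y, map_add, map_add, map_smul, map_smul,
      hD.2 _ _ (hD'.1 q x hx) y, hD'.2 _ _ (hD.1 q x hx) y, hD.2 q x hx (D' y),
      hD'.2 q x hx (D y), parSign_add_right p, parSign_add_right p', parSign_comm p' p,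
      parSign_add_left]
    simp only [mul_sub, sub_mul, mul_smul_comm, smul_mul_assoc]
    -- the two `D x * D' y` terms cancel because `(-1)^{pp'}` squares to `1`
    linear_combination (norm := module) (-parSign p' q) • (parSign_mul_self p p') • (D x * D' y)

lemma commutator_of_even_left (hD : IsSuperDer n 0 D) (hD' : IsSuperDer n p' D') :
    IsSuperDer n p' (D ∘ₗ D' - D' ∘ₗ D) := by
  simpa [parSign_zero_left] using hD.superBracket hD'

lemma anticommutator_of_odd (hD : IsSuperDer n 1 D) (hD' : IsSuperDer n 1 D') :
    IsSuperDer n 0 (D ∘ₗ D' + D' ∘ₗ D) := by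
  have h := hD.superBracket hD'
  rwa [parSign_one_one, neg_one_smul ℂ (D' ∘ₗ D), sub_neg_eq_add] at h

end IsSuperDer

lemma Submodule.apply_mem_of_mem_span {R M N P : Type*} [CommSemiring R] [AddCommMonoid M]
    [AddCommMonoid N] [AddCommMonoid P] [Module R M] [Module R N] [Module R P]
    (f : M →ₗ[R] N →ₗ[R] P) {s : Set M} {t : Set N} {p : Submodule R P}
    (h : ∀ x ∈ s, ∀ y ∈ t, f x y ∈ p) {x : M} {y : N} (hx : x ∈ span R s) (hy : y ∈ span R t) :
    f x y ∈ p :=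
  map₂_le.mp ((map₂_span_span R f s t).trans_le (span_le.mpr (Set.image2_subset_iff.mpr h)))
    x hx y hy

namespace Module.End

variable {R M : Type*} [CommRing R] [AddCommGroup M] [Module R M]
  {s t : Set (Module.End R M)} {p : Submodule R (Module.End R M)} {D D' : Module.End R M}

lemma comp_sub_comp_mem_of_mem_span (h : ∀ D ∈ s, ∀ D' ∈ t, D ∘ₗ D' - D' ∘ₗ D ∈ p)
    (hD : D ∈ Submodule.span R s) (hD' : D' ∈ Submodule.span R t) : D ∘ₗ D' - D' ∘ₗ D ∈ p :=
  Submodule.apply_mem_of_mem_span (LinearMap.mul R _ - (LinearMap.mul R _).flip) h hD hD'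

lemma comp_add_comp_mem_of_mem_span (h : ∀ D ∈ s, ∀ D' ∈ t, D ∘ₗ D' + D' ∘ₗ D ∈ p)
    (hD : D ∈ Submodule.span R s) (hD' : D' ∈ Submodule.span R t) : D ∘ₗ D' + D' ∘ₗ D ∈ p :=
  Submodule.apply_mem_of_mem_span (LinearMap.mul R _ + (LinearMap.mul R _).flip) h hD hD'

end Module.End

section Relations

variable {n : ℕ} {c : Fin n → ℂ} {H D E F : Lam n →ₗ[ℂ] Lam n}

lemma commutator_diag_diag {c' : Fin n → ℂ} {H' : Lam n →ₗ[ℂ] Lam n}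
    (hH : IsSuperDer n 0 H) (hH' : IsSuperDer n 0 H')
    (hc : ∀ i, H (ι ℂ (ev n i)) = c i • ι ℂ (ev n i))
    (hc' : ∀ i, H' (ι ℂ (ev n i)) = c' i • ι ℂ (ev n i)) :
    H ∘ₗ H' - H' ∘ₗ H = 0 :=
  (hH.commutator_of_even_left hH').ext_ev (.zero 0) fun i => by
    simp [hc, hc', smul_smul, mul_comm]

variable [NeZero n]

lemma commutator_diag_partialOne (hH : IsSuperDer n 0 H)
    (hc : ∀ i, H (ι ℂ (ev n i)) = c i • ι ℂ (ev n i)) (hD : IsSuperDer n 1 D)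
    (hD₀ : D (ι ℂ (ev n 0)) = 1) (hD' : ∀ i, i ≠ 0 → D (ι ℂ (ev n i)) = 0) :
    H ∘ₗ D - D ∘ₗ H = (-c 0) • D :=
  (hH.commutator_of_even_left hD).ext_ev (hD.smul _) fun i => by
    rcases eq_or_ne i 0 with rfl | hi
    · simp [hc, hD₀, hH.map_one]
    · simp [hc, hD' i hi]

lemma commutator_diag_E {i : Fin n} (hH : IsSuperDer n 0 H)
    (hc : ∀ i, H (ι ℂ (ev n i)) = c i • ι ℂ (ev n i)) (hE : IsSuperDer n 1 E)
    (hEi : E (ι ℂ (ev n i)) = ι ℂ (ev n 0) * ι ℂ (ev n i))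
    (hE' : ∀ j, j ≠ i → E (ι ℂ (ev n j)) = 0) :
    H ∘ₗ E - E ∘ₗ H = c 0 • E :=
  (hH.commutator_of_even_left hE).ext_ev (hE.smul _) fun j => by
    simp only [LinearMap.sub_apply, LinearMap.comp_apply, LinearMap.smul_apply, hc, map_smul]
    rcases eq_or_ne j i with rfl | hj
    · rw [hEi, hH.map_ι_mul, hc, hc, parSign_zero_left, one_smul]
      simp only [smul_mul_assoc, mul_smul_comm]
      module
    · rw [hE' j hj, map_zero, smul_zero, sub_zero, smul_zero]

lemma anticommutator_partialOne_self (hD : IsSuperDer n 1 D)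
    (hD₀ : D (ι ℂ (ev n 0)) = 1) (hD' : ∀ i, i ≠ 0 → D (ι ℂ (ev n i)) = 0) :
    D ∘ₗ D + D ∘ₗ D = 0 :=
  (hD.anticommutator_of_odd hD).ext_ev (.zero 0) fun i => by
    rcases eq_or_ne i 0 with rfl | hi
    · simp [hD₀, hD.map_one]
    · simp [hD' i hi]

lemma map_ι_ev_zero_mul {i : Fin n} (hi : i ≠ 0) (hE : IsSuperDer n 1 E)
    (hE' : ∀ j, j ≠ i → E (ι ℂ (ev n j)) = 0) (y : Lam n) :
    E (ι ℂ (ev n 0) * y) = -(ι ℂ (ev n 0) * E y) := by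
  rw [hE.map_ι_mul, hE' 0 hi.symm, zero_mul, zero_add, parSign_one_one, neg_one_smul]

/- `E` and `F` map `V` into `e₁ ∧ V`, and `E` anticommutes with left multiplication by `e₁`,
so the product contains `e₁ ∧ e₁ = 0`. -/
lemma E_E_ι_ev_eq_zero {i j : Fin n} (hi : i ≠ 0) (hE : IsSuperDer n 1 E)
    (hEi : E (ι ℂ (ev n i)) = ι ℂ (ev n 0) * ι ℂ (ev n i))
    (hE' : ∀ k, k ≠ i → E (ι ℂ (ev n k)) = 0)
    (hFj : F (ι ℂ (ev n j)) = ι ℂ (ev n 0) * ι ℂ (ev n j))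
    (hF' : ∀ k, k ≠ j → F (ι ℂ (ev n k)) = 0) (l : Fin n) :
    E (F (ι ℂ (ev n l))) = 0 := by
  rcases eq_or_ne l j with rfl | hlj
  · rw [hFj, map_ι_ev_zero_mul hi hE hE']
    rcases eq_or_ne l i with rfl | hli
    · rw [hEi, ← mul_assoc, ι_sq_zero, zero_mul, neg_zero]
    · rw [hE' l hli, mul_zero, neg_zero]
  · rw [hF' l hlj, map_zero]

lemma anticommutator_E_E {i j : Fin n} (hi : i ≠ 0) (hj : j ≠ 0)
    (hE : IsSuperDer n 1 E) (hEi : E (ι ℂ (ev n i)) = ι ℂ (ev n 0) * ι ℂ (ev n i))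
    (hE' : ∀ k, k ≠ i → E (ι ℂ (ev n k)) = 0)
    (hF : IsSuperDer n 1 F) (hFj : F (ι ℂ (ev n j)) = ι ℂ (ev n 0) * ι ℂ (ev n j))
    (hF' : ∀ k, k ≠ j → F (ι ℂ (ev n k)) = 0) :
    E ∘ₗ F + F ∘ₗ E = 0 :=
  (hE.anticommutator_of_odd hF).ext_ev (.zero 0) fun l => by
    simp only [LinearMap.add_apply, LinearMap.comp_apply, LinearMap.zero_apply,
      E_E_ι_ev_eq_zero hi hE hEi hE' hFj hF', E_E_ι_ev_eq_zero hj hF hFj hF' hEi hE', add_zero]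

lemma anticommutator_partialOne_E {i : Fin n} (hi : i ≠ 0) (hD : IsSuperDer n 1 D)
    (hD₀ : D (ι ℂ (ev n 0)) = 1) (hD' : ∀ j, j ≠ 0 → D (ι ℂ (ev n j)) = 0)
    (hE : IsSuperDer n 1 E) (hEi : E (ι ℂ (ev n i)) = ι ℂ (ev n 0) * ι ℂ (ev n i))
    (hE' : ∀ j, j ≠ i → E (ι ℂ (ev n j)) = 0) (hH : IsSuperDer n 0 H)
    (hHv : ∀ j, H (ι ℂ (ev n j)) = (Pi.single i 1 : Fin n → ℂ) j • ι ℂ (ev n j)) :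
    D ∘ₗ E + E ∘ₗ D = H :=
  (hD.anticommutator_of_odd hE).ext_ev hH fun j => by
    simp only [LinearMap.add_apply, LinearMap.comp_apply, hHv]
    rcases eq_or_ne j i with rfl | hj
    · rw [hEi, hD.map_ι_mul, hD₀, hD' j hi, map_zero, parSign_one_one, Pi.single_eq_same]
      simp
    · rw [hE' j hj, map_zero, zero_add, Pi.single_eq_of_ne hj, zero_smul]
      rcases eq_or_ne j 0 with rfl | hj0
      · rw [hD₀, hE.map_one]
      · rw [hD' j hj0, map_zero]

end Relations

theorem detecting_subalgebra_closed_general (n : ℕ) [NeZero n]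
    -- `h_c` is the even superderivation with `h_c(eᵢ) = cᵢ eᵢ` …
    (h : (Fin n → ℂ) → (Lam n →ₗ[ℂ] Lam n))
    (hEven : ∀ c, IsSuperDer n 0 (h c))
    (hVal : ∀ c i, h c (ι ℂ (ev n i)) = c i • ι ℂ (ev n i))
    -- `∂₁` is the odd superderivation with `∂₁(e₁) = 1`, `∂₁(eᵢ) = 0` for `i ≥ 2` …
    (D1 : Lam n →ₗ[ℂ] Lam n)
    (hD1odd : IsSuperDer n 1 D1)
    (hD1val₀ : D1 (ι ℂ (ev n 0)) = 1)
    (hD1val : ∀ i : Fin n, i ≠ 0 → D1 (ι ℂ (ev n i)) = 0)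
    -- … and for `i ≥ 2`, `E_i` is the odd superderivation with `E_i(eᵢ) = e₁ ∧ eᵢ`
    -- and `E_i(e_j) = 0` for `j ≠ i`.
    (E : Fin n → (Lam n →ₗ[ℂ] Lam n))
    (hEodd : ∀ i : Fin n, i ≠ 0 → IsSuperDer n 1 (E i))
    (hEval : ∀ i : Fin n, i ≠ 0 → E i (ι ℂ (ev n i)) = ι ℂ (ev n 0) * ι ℂ (ev n i))
    (hEval' : ∀ i j : Fin n, i ≠ 0 → j ≠ i → E i (ι ℂ (ev n j)) = 0) :
    -- the subspace `f = span{h_c : c} ⊕ span{∂₁, E₂, …, Eₙ}` is closed under the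
    -- supercommutator `[D,D′] = D∘D′ − (−1)^{pp′} D′∘D` …
    (∀ D ∈ Submodule.span ℂ (Set.range h), ∀ D' ∈ Submodule.span ℂ (Set.range h),
        D ∘ₗ D' - D' ∘ₗ D ∈
          Submodule.span ℂ (Set.range h) ⊔
            Submodule.span ℂ ({D1} ∪ {D'' | ∃ i : Fin n, i ≠ 0 ∧ D'' = E i})) ∧
    (∀ D ∈ Submodule.span ℂ (Set.range h),
      ∀ D' ∈ Submodule.span ℂ ({D1} ∪ {D'' | ∃ i : Fin n, i ≠ 0 ∧ D'' = E i}),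
        D ∘ₗ D' - D' ∘ₗ D ∈
          Submodule.span ℂ (Set.range h) ⊔
            Submodule.span ℂ ({D1} ∪ {D'' | ∃ i : Fin n, i ≠ 0 ∧ D'' = E i})) ∧
    (∀ D ∈ Submodule.span ℂ ({D1} ∪ {D'' | ∃ i : Fin n, i ≠ 0 ∧ D'' = E i}),
      ∀ D' ∈ Submodule.span ℂ ({D1} ∪ {D'' | ∃ i : Fin n, i ≠ 0 ∧ D'' = E i}),
        D ∘ₗ D' + D' ∘ₗ D ∈
          Submodule.span ℂ (Set.range h) ⊔
            Submodule.span ℂ ({D1} ∪ {D'' | ∃ i : Fin n, i ≠ 0 ∧ D'' = E i})) ∧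
    -- … explicitly:  `[h_c, h_{c′}] = 0` …
    (∀ c c', h c ∘ₗ h c' - h c' ∘ₗ h c = 0) ∧
    -- … `[h_c, ∂₁] = −c₁ ∂₁` …
    (∀ c, h c ∘ₗ D1 - D1 ∘ₗ h c = (-(c 0)) • D1) ∧
    -- … `[h_c, E_i] = c₁ E_i` …
    (∀ c, ∀ i : Fin n, i ≠ 0 → h c ∘ₗ E i - E i ∘ₗ h c = (c 0) • E i) ∧
    -- … `[∂₁, ∂₁] = 0` …
    (D1 ∘ₗ D1 + D1 ∘ₗ D1 = 0) ∧
    -- … `[E_i, E_j] = 0` for all `i, j` …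
    (∀ i j : Fin n, i ≠ 0 → j ≠ 0 → E i ∘ₗ E j + E j ∘ₗ E i = 0) ∧
    -- … and `[∂₁, E_i] = h_{ε_i}`.
    (∀ i : Fin n, i ≠ 0 → D1 ∘ₗ E i + E i ∘ₗ D1 = h (Pi.single i 1)) := by
  have hhh c c' := commutator_diag_diag (hEven c) (hEven c') (hVal c) (hVal c')
  have hhD c := commutator_diag_partialOne (hEven c) (hVal c) hD1odd hD1val₀ hD1val
  have hhE c i (hi : i ≠ 0) :=
    commutator_diag_E (hEven c) (hVal c) (hEodd i hi) (hEval i hi) (hEval' i · hi)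
  have hDD := anticommutator_partialOne_self hD1odd hD1val₀ hD1val
  have hEE i j (hi : i ≠ 0) (hj : j ≠ 0) := anticommutator_E_E hi hj
    (hEodd i hi) (hEval i hi) (hEval' i · hi) (hEodd j hj) (hEval j hj) (hEval' j · hj)
  have hDE i (hi : i ≠ 0) := anticommutator_partialOne_E hi hD1odd hD1val₀ hD1val
    (hEodd i hi) (hEval i hi) (hEval' i · hi) (hEven _) (hVal _)
  set 𝔥 := Submodule.span ℂ (Set.range h)
  set 𝔫 := Submodule.span ℂ ({D1} ∪ {D'' | ∃ i : Fin n, i ≠ 0 ∧ D'' = E i})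
  have hD1 : D1 ∈ 𝔫 := Submodule.subset_span (.inl rfl)
  have hE i (hi : i ≠ 0) : E i ∈ 𝔫 := Submodule.subset_span (.inr ⟨i, hi, rfl⟩)
  have hh c : h c ∈ 𝔥 := Submodule.subset_span ⟨c, rfl⟩
  refine ⟨fun D hD D' hD' => Module.End.comp_sub_comp_mem_of_mem_span ?_ hD hD',
    fun D hD D' hD' => Module.End.comp_sub_comp_mem_of_mem_span ?_ hD hD',
    fun D hD D' hD' => Module.End.comp_add_comp_mem_of_mem_span ?_ hD hD',
    hhh, hhD, hhE, hDD, hEE, hDE⟩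
  · rintro _ ⟨c, rfl⟩ _ ⟨c', rfl⟩
    exact (hhh c c').symm ▸ zero_mem _
  · rintro _ ⟨c, rfl⟩ _ (rfl | ⟨i, hi, rfl⟩)
    · exact Submodule.mem_sup_right ((hhD c).symm ▸ Submodule.smul_mem _ _ hD1)
    · exact Submodule.mem_sup_right ((hhE c i hi).symm ▸ Submodule.smul_mem _ _ (hE i hi))
  · rintro _ (rfl | ⟨i, hi, rfl⟩) _ (rfl | ⟨j, hj, rfl⟩)
    · exact hDD.symm ▸ zero_mem _
    · exact Submodule.mem_sup_left ((hDE j hj).symm ▸ hh _)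
    · rw [add_comm]
      exact Submodule.mem_sup_left ((hDE i hi).symm ▸ hh _)
    · exact (hEE i j hi hj).symm ▸ zero_mem _

theorem detecting_subalgebra_closed (n : ℕ) [NeZero n] (hn : 2 ≤ n)
    -- `h_c` is the even superderivation with `h_c(eᵢ) = cᵢ eᵢ` …
    (h : (Fin n → ℂ) → (Lam n →ₗ[ℂ] Lam n))
    (hEven : ∀ c, IsSuperDer n 0 (h c))
    (hVal : ∀ c i, h c (ι ℂ (ev n i)) = c i • ι ℂ (ev n i))
    -- `∂₁` is the odd superderivation with `∂₁(e₁) = 1`, `∂₁(eᵢ) = 0` for `i ≥ 2` …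
    (D1 : Lam n →ₗ[ℂ] Lam n)
    (hD1odd : IsSuperDer n 1 D1)
    (hD1val₀ : D1 (ι ℂ (ev n 0)) = 1)
    (hD1val : ∀ i : Fin n, i ≠ 0 → D1 (ι ℂ (ev n i)) = 0)
    -- … and for `i ≥ 2`, `E_i` is the odd superderivation with `E_i(eᵢ) = e₁ ∧ eᵢ`
    -- and `E_i(e_j) = 0` for `j ≠ i`.
    (E : Fin n → (Lam n →ₗ[ℂ] Lam n))
    (hEodd : ∀ i : Fin n, i ≠ 0 → IsSuperDer n 1 (E i))
    (hEval : ∀ i : Fin n, i ≠ 0 → E i (ι ℂ (ev n i)) = ι ℂ (ev n 0) * ι ℂ (ev n i))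
    (hEval' : ∀ i j : Fin n, i ≠ 0 → j ≠ i → E i (ι ℂ (ev n j)) = 0) :
    -- the subspace `f = span{h_c : c} ⊕ span{∂₁, E₂, …, Eₙ}` is closed under the
    -- supercommutator `[D,D′] = D∘D′ − (−1)^{pp′} D′∘D` …
    (∀ D ∈ Submodule.span ℂ (Set.range h), ∀ D' ∈ Submodule.span ℂ (Set.range h),
        D ∘ₗ D' - D' ∘ₗ D ∈
          Submodule.span ℂ (Set.range h) ⊔
            Submodule.span ℂ ({D1} ∪ {D'' | ∃ i : Fin n, i ≠ 0 ∧ D'' = E i})) ∧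
    (∀ D ∈ Submodule.span ℂ (Set.range h),
      ∀ D' ∈ Submodule.span ℂ ({D1} ∪ {D'' | ∃ i : Fin n, i ≠ 0 ∧ D'' = E i}),
        D ∘ₗ D' - D' ∘ₗ D ∈
          Submodule.span ℂ (Set.range h) ⊔
            Submodule.span ℂ ({D1} ∪ {D'' | ∃ i : Fin n, i ≠ 0 ∧ D'' = E i})) ∧
    (∀ D ∈ Submodule.span ℂ ({D1} ∪ {D'' | ∃ i : Fin n, i ≠ 0 ∧ D'' = E i}),
      ∀ D' ∈ Submodule.span ℂ ({D1} ∪ {D'' | ∃ i : Fin n, i ≠ 0 ∧ D'' = E i}),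
        D ∘ₗ D' + D' ∘ₗ D ∈
          Submodule.span ℂ (Set.range h) ⊔
            Submodule.span ℂ ({D1} ∪ {D'' | ∃ i : Fin n, i ≠ 0 ∧ D'' = E i})) ∧
    -- … explicitly:  `[h_c, h_{c′}] = 0` …
    (∀ c c', h c ∘ₗ h c' - h c' ∘ₗ h c = 0) ∧
    -- … `[h_c, ∂₁] = −c₁ ∂₁` …
    (∀ c, h c ∘ₗ D1 - D1 ∘ₗ h c = (-(c 0)) • D1) ∧
    -- … `[h_c, E_i] = c₁ E_i` …
    (∀ c, ∀ i : Fin n, i ≠ 0 → h c ∘ₗ E i - E i ∘ₗ h c = (c 0) • E i) ∧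
    -- … `[∂₁, ∂₁] = 0` …
    (D1 ∘ₗ D1 + D1 ∘ₗ D1 = 0) ∧
    -- … `[E_i, E_j] = 0` for all `i, j` …
    (∀ i j : Fin n, i ≠ 0 → j ≠ 0 → E i ∘ₗ E j + E j ∘ₗ E i = 0) ∧
    -- … and `[∂₁, E_i] = h_{ε_i}`.
    (∀ i : Fin n, i ≠ 0 → D1 ∘ₗ E i + E i ∘ₗ D1 = h (Pi.single i 1)) :=
  detecting_subalgebra_closed_general n h hEven hVal D1 hD1odd hD1val₀ hD1val E hEodd hEval hEval'
end
end
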